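/- Assume Σ_j λ_j < ∞ and μ(Ω) < ∞. Let V ⊆ H be a closed subspace of dimension m (possibly infinite) admitting an H-orthonormal basis (u_j)_{1≤j≤m} of V with ⟨ι u_i, ι u_j⟩_{L²(μ)} = λ_{j,V} δ_{ij} and λ_{1,V} ≥ λ_{2,V} ≥ … > 0. If sup over x ∈ Ω of P_V(x) is at most ε, then for every 1 ≤ j ≤ m: 0 ≤ λ_j − λ_{j,V} ≤ μ(Ω)·ε². -/

import Mathlib

/-!
Write `λ_j = ‖ι e_j‖²`. Lower bound (Courant–Fischer): on the `(j+1)`-dimensional span of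
`u_0, …, u_j` one has `‖ι g‖² ≥ λ_{j,V} ‖g‖²`, and a dimension count gives a nonzero `g` there
orthogonal to `e_0, …, e_{j-1}`, for which Parseval in the basis `e` gives `‖ι g‖² ≤ λ_j ‖g‖²`.

Upper bound (trace comparison): since `ι f = ⟪f, k ·⟫`, Parseval in `H` and in `V` gives
`∑ λ_j = ∫ ‖k x‖² dμ` and `∑ λ_{j,V} = ∫ ‖P_V k x‖² dμ`. Pointwise
`‖k x‖² = ‖P_V k x‖² + P_V(x)² ≤ ‖P_V k x‖² + ε²`, so the nonnegative gaps `λ_j - λ_{j,V}`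
sum to at most `μ(Ω) ε²`.
-/

open MeasureTheory
open scoped InnerProductSpace

section Hilbert

variable {E F : Type*} [NormedAddCommGroup E] [InnerProductSpace ℝ E]
  [NormedAddCommGroup F] [InnerProductSpace ℝ F]

theorem HilbertBasis.hasSum_inner_sq {ι : Type*} (b : HilbertBasis ι ℝ E) (x : E) :
    HasSum (fun i => ⟪b i, x⟫_ℝ ^ 2) (‖x‖ ^ 2) := by
  rw [← real_inner_self_eq_norm_sq]
  refine (b.hasSum_inner_mul_inner x x).congr_fun fun i => ?_
  rw [sq, real_inner_comm x]

theorem Orthonormal.hasSum_inner_sq_of_mem_topologicalClosure [CompleteSpace E] {ι : Type*}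
    {v : ι → E} (hv : Orthonormal ℝ v) {x : E}
    (hx : x ∈ (Submodule.span ℝ (Set.range v)).topologicalClosure) :
    HasSum (fun i => ⟪v i, x⟫_ℝ ^ 2) (‖x‖ ^ 2) := by
  set U := Submodule.span ℝ (Set.range v)
  set K := U.topologicalClosure
  have : CompleteSpace K := U.isClosed_topologicalClosure.completeSpace_coe
  let w : ι → K := fun i => ⟨v i, U.le_topologicalClosure (Submodule.subset_span ⟨i, rfl⟩)⟩
  have hw : Orthonormal ℝ w := by
    simpa [Orthonormal, w] using hv
  have hspan : K.subtype '' (Submodule.span ℝ (Set.range w) : Set K) = U := by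
    rw [← Submodule.map_coe, Submodule.map_span, ← Set.range_comp]
    rfl
  have hdense : ⊤ ≤ (Submodule.span ℝ (Set.range w)).topologicalClosure := by
    rw [top_le_iff, ← Submodule.dense_iff_topologicalClosure_eq_top,
      Topology.IsInducing.subtypeVal.dense_iff]
    intro y
    change (y : E) ∈ closure (K.subtype '' _)
    rw [hspan, ← Submodule.topologicalClosure_coe]
    exact y.2
  simpa [HilbertBasis.coe_mk] using (HilbertBasis.mk hw hdense).hasSum_inner_sq ⟨x, hx⟩

theorem HilbertBasis.hasSum_inner_sq_mul {ι : Type*} [DecidableEq ι] (b : HilbertBasis ι ℝ E)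
    (T : E →L[ℝ] F) {lam : ι → ℝ} (hT : ∀ i j, ⟪T (b i), T (b j)⟫_ℝ = if i = j then lam j else 0)
    (x : E) :
    HasSum (fun i => ⟪b i, x⟫_ℝ ^ 2 * lam i) (‖T x‖ ^ 2) := by
  have hTx : HasSum (fun i => ⟪b i, x⟫_ℝ • T (b i)) (T x) := by
    simpa [b.repr_apply_apply] using T.hasSum (b.hasSum_repr x)
  have hcoord : ∀ i, ⟪T (b i), T x⟫_ℝ = ⟪b i, x⟫_ℝ * lam i := by
    intro i
    have h := (innerSL ℝ (T (b i))).hasSum hTx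
    simp only [innerSL_apply_apply, real_inner_smul_right, hT, mul_ite, mul_zero] at h
    simpa using (hasSum_single i fun l hl => by simp [Ne.symm hl]).unique h |>.symm
  rw [← real_inner_self_eq_norm_sq]
  refine ((innerSL ℝ (T x)).hasSum hTx).congr_fun fun i => ?_
  rw [innerSL_apply_apply, real_inner_smul_right, ← real_inner_comm (T x), hcoord]
  ring

theorem HilbertBasis.norm_sq_map_le_of_inner_eq_zero (b : HilbertBasis ℕ ℝ E) (T : E →L[ℝ] F)
    {lam : ℕ → ℝ} (hT : ∀ i j, ⟪T (b i), T (b j)⟫_ℝ = if i = j then lam j else 0)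
    (hlam : Antitone lam) {j : ℕ} {x : E} (hx : ∀ i < j, ⟪b i, x⟫_ℝ = 0) :
    ‖T x‖ ^ 2 ≤ lam j * ‖x‖ ^ 2 := by
  refine hasSum_le (fun i => ?_) (b.hasSum_inner_sq_mul T hT x)
    ((b.hasSum_inner_sq x).mul_left _)
  rcases lt_or_ge i j with hi | hi
  · simp [hx i hi]
  · rw [mul_comm]
    exact mul_le_mul_of_nonneg_right (hlam hi) (sq_nonneg _)

theorem norm_sq_sum_smul_of_inner_eq_ite {ι : Type*} [Fintype ι] [DecidableEq ι] {v : ι → E}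
    {d : ι → ℝ} (hv : ∀ i j, ⟪v i, v j⟫_ℝ = if i = j then d j else 0) (a : ι → ℝ) :
    ‖∑ i, a i • v i‖ ^ 2 = ∑ i, a i ^ 2 * d i := by
  rw [← real_inner_self_eq_norm_sq, sum_inner]
  simp only [inner_sum, real_inner_smul_left, real_inner_smul_right, hv, mul_ite, mul_zero,
    Finset.sum_ite_eq, Finset.mem_univ, if_true]
  exact Finset.sum_congr rfl fun i _ => by ring

theorem mul_norm_sq_le_norm_sq_map_of_mem_span {ι : Type*} [Fintype ι] [DecidableEq ι]
    (T : E →L[ℝ] F) {w : ι → E} (hw : Orthonormal ℝ w) {d : ι → ℝ}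
    (hT : ∀ i j, ⟪T (w i), T (w j)⟫_ℝ = if i = j then d j else 0) {c : ℝ} (hc : ∀ i, c ≤ d i)
    {x : E} (hx : x ∈ Submodule.span ℝ (Set.range w)) :
    c * ‖x‖ ^ 2 ≤ ‖T x‖ ^ 2 := by
  obtain ⟨a, rfl⟩ := (Submodule.mem_span_range_iff_exists_fun ℝ).mp hx
  rw [norm_sq_sum_smul_of_inner_eq_ite (d := fun _ => 1) (orthonormal_iff_ite.mp hw), map_sum]
  simp only [map_smul]
  rw [norm_sq_sum_smul_of_inner_eq_ite hT, Finset.mul_sum]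
  refine Finset.sum_le_sum fun i _ => ?_
  rw [mul_one, mul_comm]
  exact mul_le_mul_of_nonneg_left (hc i) (sq_nonneg _)

theorem Submodule.exists_ne_zero_inner_eq_zero (W : Submodule ℝ E) [FiniteDimensional ℝ W]
    {n : ℕ} (hW : n < Module.finrank ℝ W) (f : Fin n → E) :
    ∃ x ∈ W, x ≠ 0 ∧ ∀ i, ⟪f i, x⟫_ℝ = 0 := by
  let L : W →ₗ[ℝ] Fin n → ℝ := LinearMap.pi fun i => (innerₛₗ ℝ (f i)).comp W.subtype
  obtain ⟨x, hx, hx0⟩ := Submodule.exists_mem_ne_zero_of_ne_bot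
    (L.ker_ne_bot_of_finrank_lt (by simpa using hW))
  exact ⟨x, x.2, by simpa using hx0, fun i => congrFun (LinearMap.mem_ker.mp hx) i⟩

theorem HilbertBasis.le_of_mul_norm_sq_le_norm_sq_map (b : HilbertBasis ℕ ℝ E) (T : E →L[ℝ] F)
    {lam : ℕ → ℝ} (hT : ∀ i j, ⟪T (b i), T (b j)⟫_ℝ = if i = j then lam j else 0)
    (hlam : Antitone lam) (W : Submodule ℝ E) [FiniteDimensional ℝ W] {j : ℕ}
    (hW : j < Module.finrank ℝ W) {c : ℝ} (hc : ∀ x ∈ W, c * ‖x‖ ^ 2 ≤ ‖T x‖ ^ 2) :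
    c ≤ lam j := by
  obtain ⟨x, hxW, hx0, hx⟩ := W.exists_ne_zero_inner_eq_zero hW fun i : Fin j => b i
  have hupper := b.norm_sq_map_le_of_inner_eq_zero T hT hlam (x := x) fun i hi => hx ⟨i, hi⟩
  exact le_of_mul_le_mul_right ((hc x hxW).trans hupper) (by positivity)

theorem HilbertBasis.le_of_orthonormal_of_antitoneOn (b : HilbertBasis ℕ ℝ E) (T : E →L[ℝ] F)
    {lam : ℕ → ℝ} (hT : ∀ i j, ⟪T (b i), T (b j)⟫_ℝ = if i = j then lam j else 0)
    (hlam : Antitone lam) {n : ℕ} {u : ℕ → E} {d : ℕ → ℝ}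
    (hu : ∀ i ≤ n, ∀ j ≤ n, ⟪u i, u j⟫_ℝ = if i = j then 1 else 0)
    (hTu : ∀ i ≤ n, ∀ j ≤ n, ⟪T (u i), T (u j)⟫_ℝ = if i = j then d j else 0)
    (hd : AntitoneOn d (Set.Iic n)) :
    d n ≤ lam n := by
  let w : Fin (n + 1) → E := fun i => u i
  have hw : Orthonormal ℝ w := orthonormal_iff_ite.2 fun i j => by
    simpa [w, Fin.val_inj] using hu i i.is_le j j.is_le
  have := FiniteDimensional.span_of_finite ℝ (Set.finite_range w)
  refine b.le_of_mul_norm_sq_le_norm_sq_map T hT hlam (Submodule.span ℝ (Set.range w)) ?_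
    fun x hx => mul_norm_sq_le_norm_sq_map_of_mem_span T hw (d := fun i => d i)
      (fun i j => by simpa [w, Fin.val_inj] using hTu i i.is_le j j.is_le)
      (fun i => hd (Set.mem_Iic.2 i.is_le) Set.self_mem_Iic i.is_le) hx
  rw [finrank_span_eq_card hw.linearIndependent, Fintype.card_fin]
  exact n.lt_succ_self

end Hilbert

theorem MeasureTheory.Lp.ofReal_norm_sq_eq_lintegral {Ω : Type*} [MeasurableSpace Ω]
    {μ : Measure Ω} (f : Lp ℝ 2 μ) :
    ENNReal.ofReal (‖f‖ ^ 2) = ∫⁻ x, ENNReal.ofReal (f x ^ 2) ∂μ := by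
  have hf : ‖f‖ ^ 2 = ∫ x, f x ^ 2 ∂μ := by
    rw [← real_inner_self_eq_norm_sq, L2.inner_def]
    simp [sq]
  rw [hf, ofReal_integral_eq_lintegral_ofReal (Lp.memLp f).integrable_sq
    (Filter.Eventually.of_forall fun x => sq_nonneg _)]

theorem MeasureTheory.lintegral_ofReal_eq_tsum_ofReal_norm_sq {Ω : Type*} [MeasurableSpace Ω]
    {μ : Measure Ω} {ι : Type*} [Countable ι] (f : ι → Lp ℝ 2 μ) {g : ι → Ω → ℝ} {F : Ω → ℝ}
    (hfg : ∀ i, f i =ᵐ[μ] g i) (hF : ∀ x, HasSum (fun i => g i x ^ 2) (F x)) :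
    ∫⁻ x, ENNReal.ofReal (F x) ∂μ = ∑' i, ENNReal.ofReal (‖f i‖ ^ 2) := by
  simp only [Lp.ofReal_norm_sq_eq_lintegral]
  rw [← lintegral_tsum fun i =>
    ((Lp.aestronglyMeasurable (f i)).aemeasurable.pow_const 2).ennreal_ofReal]
  refine lintegral_congr_ae ?_
  filter_upwards [ae_all_iff.mpr hfg] with x hx
  simp only [hx]
  rw [← (hF x).tsum_eq, ENNReal.ofReal_tsum_of_nonneg (fun i => sq_nonneg _) (hF x).summable]

theorem ENNReal.sub_le_of_tsum_le_tsum_add {α : Type*} {a b : α → ENNReal} {S : Set α}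
    {c : ENNReal} (hba : ∀ i ∈ S, b i ≤ a i) (ha : ∑' i, a i ≠ ⊤)
    (h : ∑' i, a i ≤ ∑' i : S, b i + c) {j : α} (hj : j ∈ S) : a j - b j ≤ c := by
  have hbS : ∑' i : S, b i ≠ ⊤ :=
    ne_top_of_le_ne_top ha <| (ENNReal.tsum_le_tsum fun i : S => hba i i.2).trans
      (ENNReal.tsum_comp_le_tsum_of_injective Subtype.val_injective a)
  refine ENNReal.le_of_add_le_add_left hbS ?_
  calc ∑' i : S, b i + (a j - b j)
      ≤ ∑' i : S, b i + ∑' i : S, (a i - b i) :=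
        add_le_add_right (ENNReal.le_tsum (f := fun i : S => a i - b i) ⟨j, hj⟩) _
    _ = ∑' i : S, a i := by
        rw [← ENNReal.tsum_add]
        exact tsum_congr fun i => add_tsub_cancel_of_le (hba i i.2)
    _ ≤ ∑' i, a i := ENNReal.tsum_comp_le_tsum_of_injective Subtype.val_injective a
    _ ≤ ∑' i : S, b i + c := h

theorem tsum_ofReal_norm_sq_le_of_norm_sub_le {H Ω : Type*} [NormedAddCommGroup H]
    [InnerProductSpace ℝ H] [CompleteSpace H] [MeasurableSpace Ω] {μ : Measure Ω}
    {ι₁ ι₂ : Type*} [Countable ι₁] [Countable ι₂] (T : H →L[ℝ] Lp ℝ 2 μ) {k : Ω → H}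
    (hT : ∀ f, T f =ᵐ[μ] fun x => ⟪f, k x⟫_ℝ) {v : ι₁ → H} (hv : Orthonormal ℝ v)
    (hv_dense : (Submodule.span ℝ (Set.range v)).topologicalClosure = ⊤) {w : ι₂ → H}
    (hw : Orthonormal ℝ w) {V : Submodule ℝ H}
    (hV : (Submodule.span ℝ (Set.range w)).topologicalClosure = V) {p : H → H}
    (hp : ∀ f, p f ∈ V ∧ f - p f ∈ Vᗮ) {ε : ℝ} (hε : ∀ x, ‖k x - p (k x)‖ ≤ ε) :
    ∑' i, ENNReal.ofReal (‖T (v i)‖ ^ 2) ≤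
      ∑' i, ENNReal.ofReal (‖T (w i)‖ ^ 2) + ENNReal.ofReal (ε ^ 2) * μ Set.univ := by
  have hkH : ∀ x, HasSum (fun i => ⟪v i, k x⟫_ℝ ^ 2) (‖k x‖ ^ 2) := fun x =>
    hv.hasSum_inner_sq_of_mem_topologicalClosure (hv_dense ▸ Submodule.mem_top)
  have hkV : ∀ x, HasSum (fun i => ⟪w i, k x⟫_ℝ ^ 2) (‖p (k x)‖ ^ 2) := by
    intro x
    refine (hw.hasSum_inner_sq_of_mem_topologicalClosure (hV ▸ (hp (k x)).1)).congr_fun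
      fun i => ?_
    have hwi : w i ∈ V := hV ▸ Submodule.le_topologicalClosure _ (Submodule.subset_span ⟨i, rfl⟩)
    have h := (Submodule.mem_orthogonal V _).mp (hp (k x)).2 (w i) hwi
    rw [inner_sub_right, sub_eq_zero] at h
    rw [h]
  have hres : ∀ x, ‖k x‖ ^ 2 ≤ ‖p (k x)‖ ^ 2 + ε ^ 2 := by
    intro x
    have horth : ⟪p (k x), k x - p (k x)⟫_ℝ = 0 :=
      (Submodule.mem_orthogonal V _).mp (hp (k x)).2 _ (hp (k x)).1
    calc ‖k x‖ ^ 2 = ‖p (k x) + (k x - p (k x))‖ ^ 2 := by rw [add_sub_cancel]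
      _ = ‖p (k x)‖ ^ 2 + ‖k x - p (k x)‖ ^ 2 := by
        simpa only [sq] using norm_add_sq_eq_norm_sq_add_norm_sq_real horth
      _ ≤ ‖p (k x)‖ ^ 2 + ε ^ 2 := by gcongr; exact hε x
  calc ∑' i, ENNReal.ofReal (‖T (v i)‖ ^ 2)
      = ∫⁻ x, ENNReal.ofReal (‖k x‖ ^ 2) ∂μ :=
        (lintegral_ofReal_eq_tsum_ofReal_norm_sq _ (fun i => hT (v i)) hkH).symm
    _ ≤ ∫⁻ x, (ENNReal.ofReal (‖p (k x)‖ ^ 2) + ENNReal.ofReal (ε ^ 2)) ∂μ :=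
        lintegral_mono fun x => (ENNReal.ofReal_le_ofReal (hres x)).trans ENNReal.ofReal_add_le
    _ = ∑' i, ENNReal.ofReal (‖T (w i)‖ ^ 2) + ENNReal.ofReal (ε ^ 2) * μ Set.univ := by
        rw [lintegral_add_right _ measurable_const, lintegral_const,
          lintegral_ofReal_eq_tsum_ofReal_norm_sq _ (fun i => hT (w i)) hkV]

theorem stmt16_general {H : Type*} [NormedAddCommGroup H] [InnerProductSpace ℝ H] [CompleteSpace H]
    {Ω : Type*} [MeasurableSpace Ω] (μ : Measure Ω) [IsFiniteMeasure μ] (k : Ω → H)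
    (ι : H →L[ℝ] Lp ℝ 2 μ)
    (hι : ∀ f : H, (ι f : Ω → ℝ) =ᵐ[μ] fun x => ⟪f, k x⟫_ℝ)
    (e : ℕ → H) (lam : ℕ → ℝ)
    (he : Orthonormal ℝ e)
    (hdense : (Submodule.span ℝ (Set.range e)).topologicalClosure = ⊤)
    (hmono : ∀ j, lam (j + 1) ≤ lam j)
    (heig : ∀ i j, ⟪ι (e i), ι (e j)⟫_ℝ = if i = j then lam j else 0)
    (hsum : Summable lam)
    (V : Submodule ℝ H)
    (m : ℕ∞) (u : ℕ → H) (lamV : ℕ → ℝ)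
    (huon : ∀ i j : ℕ, (i : ℕ∞) < m → (j : ℕ∞) < m →
      ⟪u i, u j⟫_ℝ = if i = j then 1 else 0)
    (huspan : (Submodule.span ℝ (u '' {j : ℕ | (j : ℕ∞) < m})).topologicalClosure = V)
    (hlamV : ∀ i j : ℕ, (i : ℕ∞) < m → (j : ℕ∞) < m →
      ⟪ι (u i), ι (u j)⟫_ℝ = if i = j then lamV j else 0)
    (hlamVmono : ∀ j : ℕ, ((j + 1 : ℕ) : ℕ∞) < m → lamV (j + 1) ≤ lamV j)
    (p : H →ₗ[ℝ] H) (hp : ∀ f : H, p f ∈ V ∧ f - p f ∈ Vᗮ)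
    (ε : ℝ) (hε : ∀ x : Ω, ‖k x - p (k x)‖ ≤ ε) :
    ∀ j : ℕ, (j : ℕ∞) < m →
      0 ≤ lam j - lamV j ∧ lam j - lamV j ≤ (μ Set.univ).toReal * ε ^ 2 := by
  set S := {j : ℕ | (j : ℕ∞) < m}
  have hlam_eq (i : ℕ) : lam i = ‖ι (e i)‖ ^ 2 := by
    rw [← real_inner_self_eq_norm_sq, heig, if_pos rfl]
  have hlamV_eq (i : S) : lamV i = ‖ι (u i)‖ ^ 2 := by
    rw [← real_inner_self_eq_norm_sq, hlamV i i i.2 i.2, if_pos rfl]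
  have hle (n : ℕ) (hn : n ∈ S) : lamV n ≤ lam n := by
    have hS {i : ℕ} (hi : i ≤ n) : (i : ℕ∞) < m := lt_of_le_of_lt (Nat.cast_le.2 hi) hn
    exact (HilbertBasis.mk he hdense.ge).le_of_orthonormal_of_antitoneOn ι
      (by simpa only [HilbertBasis.coe_mk] using heig) (antitone_nat_of_succ_le hmono)
      (fun i hi i' hi' => huon i i' (hS hi) (hS hi'))
      (fun i hi i' hi' => hlamV i i' (hS hi) (hS hi'))
      (antitoneOn_of_add_one_le Set.ordConnected_Iic fun i _ _ hi => hlamVmono i (hS hi))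
  have htrace := tsum_ofReal_norm_sq_le_of_norm_sub_le ι hι he hdense (w := fun i : S => u i)
    (orthonormal_iff_ite.2 fun i i' => by simpa [Subtype.val_inj] using huon i i' i.2 i'.2)
    (by rwa [← Set.image_eq_range]) hp hε
  simp only [← hlam_eq, ← hlamV_eq] at htrace
  have hfin : ∑' i, ENNReal.ofReal (lam i) ≠ ⊤ := by
    rw [← ENNReal.ofReal_tsum_of_nonneg (fun i => hlam_eq i ▸ sq_nonneg _) hsum]
    exact ENNReal.ofReal_ne_top
  intro j hj
  have hgap := ENNReal.sub_le_of_tsum_le_tsum_add (fun i hi => ENNReal.ofReal_le_ofReal (hle i hi))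
    hfin htrace hj
  rw [← ENNReal.ofReal_sub _ (hlamV_eq ⟨j, hj⟩ ▸ sq_nonneg _),
    ← ENNReal.ofReal_toReal (measure_ne_top μ _),
    ← ENNReal.ofReal_mul (sq_nonneg _), ENNReal.ofReal_le_ofReal_iff (by positivity)] at hgap
  exact ⟨sub_nonneg.2 (hle j hj), by linarith⟩

/-- Assume `Σ_j λ_j < ∞` and `μ(Ω) < ∞`. Let `V ⊆ H` be a closed subspace
of dimension `m` (possibly infinite) with an `H`-orthonormal basis `(u_j)_{j<m}` of `V`
satisfying `⟪ι u_i, ι u_j⟫_{L²} = λ_{j,V} δ_{ij}`, `λ_{0,V} ≥ λ_{1,V} ≥ … > 0`. If the Power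
Function of `V` is bounded by `ε` on `Ω`, then `0 ≤ λ_j − λ_{j,V} ≤ μ(Ω) ε²` for all
`j < m`. -/
theorem stmt16 {H : Type*} [NormedAddCommGroup H] [InnerProductSpace ℝ H] [CompleteSpace H]
    {Ω : Type*} [MeasurableSpace Ω] (μ : Measure Ω) [IsFiniteMeasure μ] (k : Ω → H)
    (ι : H →L[ℝ] Lp ℝ 2 μ)
    (hι : ∀ f : H, (ι f : Ω → ℝ) =ᵐ[μ] fun x => ⟪f, k x⟫_ℝ)
    (hinj : Function.Injective ι)
    (e : ℕ → H) (lam : ℕ → ℝ)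
    (he : Orthonormal ℝ e)
    (hdense : (Submodule.span ℝ (Set.range e)).topologicalClosure = ⊤)
    (hpos : ∀ j, 0 < lam j) (hmono : ∀ j, lam (j + 1) ≤ lam j)
    (heig : ∀ i j, ⟪ι (e i), ι (e j)⟫_ℝ = if i = j then lam j else 0)
    (hsum : Summable lam)
    (V : Submodule ℝ H) (hVc : IsClosed (V : Set H))
    (m : ℕ∞) (u : ℕ → H) (lamV : ℕ → ℝ)
    (humem : ∀ j : ℕ, (j : ℕ∞) < m → u j ∈ V)
    (huon : ∀ i j : ℕ, (i : ℕ∞) < m → (j : ℕ∞) < m →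
      ⟪u i, u j⟫_ℝ = if i = j then 1 else 0)
    (huspan : (Submodule.span ℝ (u '' {j : ℕ | (j : ℕ∞) < m})).topologicalClosure = V)
    (hlamV : ∀ i j : ℕ, (i : ℕ∞) < m → (j : ℕ∞) < m →
      ⟪ι (u i), ι (u j)⟫_ℝ = if i = j then lamV j else 0)
    (hlamVpos : ∀ j : ℕ, (j : ℕ∞) < m → 0 < lamV j)
    (hlamVmono : ∀ j : ℕ, ((j + 1 : ℕ) : ℕ∞) < m → lamV (j + 1) ≤ lamV j)
    (p : H →ₗ[ℝ] H) (hp : ∀ f : H, p f ∈ V ∧ f - p f ∈ Vᗮ)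
    (ε : ℝ) (hε : ∀ x : Ω, ‖k x - p (k x)‖ ≤ ε) :
    ∀ j : ℕ, (j : ℕ∞) < m →
      0 ≤ lam j - lamV j ∧ lam j - lamV j ≤ (μ Set.univ).toReal * ε ^ 2 :=
  stmt16_general μ k ι hι e lam he hdense hmono heig hsum V m u lamV huon huspan hlamV hlamVmono p
    hp ε hε
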